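/- Let A be a totally unimodular real m×n matrix, k ∈ {1,…,m}, and I ⊆ {1,…,m} with k ∉ I. Then every extreme point (x₊, x₋, y₊, y₋) of the standard-form LP polyhedron Q has all of its coordinates in {0, 1}. -/

import Mathlib

open Matrix

/-- The feasible set `F = {x : A(k,:)x = 1, A(i,:)x = 0 for i ∈ I}`. -/
def feasSet {m n : ℕ} (A : Matrix (Fin m) (Fin n) ℝ) (k : Fin m) (I : Finset (Fin m)) :
    Set (Fin n → ℝ) :=
  {x | A k ⬝ᵥ x = 1 ∧ ∀ i ∈ I, A i ⬝ᵥ x = 0}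

open Classical in
/-- The l0 objective `‖A(Ī,:)x‖₀`: number of indices `i ∉ I` with `A(i,:)x ≠ 0`. -/
noncomputable def l0Obj {m n : ℕ} (A : Matrix (Fin m) (Fin n) ℝ) (I : Finset (Fin m))
    (x : Fin n → ℝ) : ℕ :=
  (Iᶜ.filter (fun i => A i ⬝ᵥ x ≠ 0)).card

/-- Points `(x₊, x₋, y₊, y₋)` of the standard-form LP. -/
abbrev LPPoint (m n : ℕ) (I : Finset (Fin m)) : Type :=
  (Fin n → ℝ) × (Fin n → ℝ) × ({i : Fin m // i ∉ I} → ℝ) × ({i : Fin m // i ∉ I} → ℝ)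

/-- The standard-form LP polyhedron `Q`. -/
def lpQ {m n : ℕ} (A : Matrix (Fin m) (Fin n) ℝ) (k : Fin m) (I : Finset (Fin m)) :
    Set (LPPoint m n I) :=
  {θ | 0 ≤ θ.1 ∧ 0 ≤ θ.2.1 ∧ 0 ≤ θ.2.2.1 ∧ 0 ≤ θ.2.2.2 ∧
    (∀ j : {i : Fin m // i ∉ I}, A j.1 ⬝ᵥ (θ.1 - θ.2.1) = θ.2.2.1 j - θ.2.2.2 j) ∧
    A k ⬝ᵥ (θ.1 - θ.2.1) = 1 ∧
    ∀ i ∈ I, A i ⬝ᵥ (θ.1 - θ.2.1) = 0}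

/-- The LP objective `c(x₊,x₋,y₊,y₋) = Σ_{i∈Ī} (y₊(i) + y₋(i))`. -/
noncomputable def lpObj {m n : ℕ} (I : Finset (Fin m)) (θ : LPPoint m n I) : ℝ :=
  ∑ j : {i : Fin m // i ∉ I}, (θ.2.2.1 j + θ.2.2.2 j)

/-!
Write `Q` as `{z ≥ 0 | M z = b}` with `z = (x₊, x₋, y₊, y₋)`. Every column of the augmented
matrix `[M | b]` is `±` a column of `[A' | 1]`, where `A'` stacks the rows of `A` indexed by `Ī`,
`I` and `k`; hence `[M | b]` is totally unimodular. At an extreme point `z` the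
columns of `M` on the support of `z` are linearly independent, so `z` restricted to its support
solves a nonsingular square subsystem `C u = b'`. By Cramer's rule `det C * u j` is a square
subdeterminant of `[M | b]`, and `det C = ±1`, so every entry of `z` lies in `{0, ±1}`, hence in
`{0, 1}` by nonnegativity.
-/

namespace Matrix

variable {ρ γ κ R K : Type*}

lemma mul_mem_range_signType_cast [CommRing R] {a b : R} (ha : a ∈ Set.range SignType.cast)
    (hb : b ∈ Set.range SignType.cast) : a * b ∈ Set.range SignType.cast := by
  obtain ⟨s, rfl⟩ := ha
  obtain ⟨t, rfl⟩ := hb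
  exact ⟨s * t, SignType.coe_mul s t⟩

lemma mul_self_eq_one_of_mem_range_signType_cast [CommRing R] {a : R}
    (ha : a ∈ Set.range SignType.cast) (ha₀ : a ≠ 0) : a * a = 1 := by
  obtain ⟨s, rfl⟩ := ha
  cases s <;> simp_all

lemma IsTotallyUnimodular.mul_diagonal_signType [CommRing R] [Fintype γ] [DecidableEq γ]
    {M : Matrix ρ γ R} (hM : M.IsTotallyUnimodular) (s : γ → SignType) :
    (M * diagonal fun j => (s j : R)).IsTotallyUnimodular := by
  rw [isTotallyUnimodular_iff] at hM ⊢
  intro k f g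
  have hsub : (M * diagonal fun j => (s j : R)).submatrix f g
      = M.submatrix f g * diagonal fun x => (s (g x) : R) := by
    ext
    simp [mul_diagonal]
  rw [hsub, det_mul, det_diagonal]
  exact mul_mem_range_signType_cast (hM k f g)
    ⟨∏ x, s (g x), map_prod (SignType.castHom : SignType →*₀ R) _ _⟩

lemma cramer_mulVec [CommRing R] [Fintype κ] [DecidableEq κ] (C : Matrix κ κ R) (u : κ → R) :
    cramer C (C *ᵥ u) = C.det • u := by
  rw [cramer_eq_adjugate_mulVec, mulVec_mulVec, adjugate_mul, smul_mulVec, one_mulVec]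

lemma IsTotallyUnimodular.apply_mem_range_of_submatrix_mulVec_eq [CommRing R] [Fintype κ]
    [DecidableEq κ] {M : Matrix ρ γ R} {b : ρ → R}
    (hTU : (fromCols M (replicateCol Unit b)).IsTotallyUnimodular) (f : κ → ρ) (g : κ → γ)
    (hdet : (M.submatrix f g).det ≠ 0) {u : κ → R} (hu : M.submatrix f g *ᵥ u = b ∘ f) (j : κ) :
    u j ∈ Set.range SignType.cast := by
  rw [isTotallyUnimodular_iff_fintype] at hTU
  set C := M.submatrix f g
  have hC : C.det ∈ Set.range SignType.cast := by
    convert hTU κ f (Sum.inl ∘ g) using 3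
    ext
    simp [C]
  have hCj : (C.updateCol j (b ∘ f)).det ∈ Set.range SignType.cast := by
    convert hTU κ f (Function.update (Sum.inl ∘ g) j (Sum.inr ())) using 3
    ext x y
    by_cases hy : y = j <;> simp [C, hy]
  have hCu : u j = C.det * (C.updateCol j (b ∘ f)).det := by
    rw [← hu, ← cramer_apply, cramer_mulVec, Pi.smul_apply, smul_eq_mul, ← mul_assoc,
      mul_self_eq_one_of_mem_range_signType_cast hC hdet, one_mul]
  exact hCu ▸ mul_mem_range_signType_cast hC hCj

lemma exists_det_submatrix_ne_zero [Field K] [Fintype ρ] [Fintype κ] [DecidableEq κ]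
    (N : Matrix ρ κ K) (hN : Function.Injective N.mulVec) :
    ∃ f : κ → ρ, (N.submatrix f id).det ≠ 0 := by
  have hspan : Submodule.span K (Set.range N.row) = ⊤ := by
    apply Submodule.eq_top_of_finrank_eq
    rw [← rank_eq_finrank_span_row, Module.finrank_fintype_fun_eq_card]
    exact LinearMap.finrank_range_of_inj (f := N.mulVecLin) hN |>.trans (by simp)
  obtain ⟨ι, a, -, hspan_a, hli⟩ := exists_linearIndependent' K N.row
  let B := Module.Basis.mk hli (by rw [hspan_a, hspan])
  have : Fintype ι := FiniteDimensional.fintypeBasisIndex B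
  have e : κ ≃ ι := Fintype.equivOfCardEq <| by
    rw [← Module.finrank_eq_card_basis B, Module.finrank_fintype_fun_eq_card]
  refine ⟨a ∘ e, ((isUnit_iff_isUnit_det _).1 ?_).ne_zero⟩
  exact linearIndependent_rows_iff_isUnit.1 (hli.comp e e.injective)

lemma submatrix_val_mulVec_comp_val [NonUnitalNonAssocSemiring R] [Fintype γ] {p : γ → Prop}
    [DecidablePred p] (M : Matrix ρ γ R) {w : γ → R} (hw : ∀ j, ¬ p j → w j = 0) :
    M.submatrix id (Subtype.val : Subtype p → γ) *ᵥ (w ∘ Subtype.val) = M *ᵥ w := by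
  ext i
  simp only [mulVec, dotProduct, submatrix_apply, id, Function.comp_apply]
  rw [← Finset.sum_subtype (Finset.univ.filter p) (by simp) (fun j => M i j * w j)]
  exact Finset.sum_filter_of_ne fun j _ h => by_contra fun hj => h (by rw [hw j hj, mul_zero])

lemma IsTotallyUnimodular.apply_mem_range_of_mulVec_eq [Field K] [Fintype ρ] [Fintype γ]
    {M : Matrix ρ γ K} {b : ρ → K} (hTU : (fromCols M (replicateCol Unit b)).IsTotallyUnimodular)
    {v : γ → K} (hv : M *ᵥ v = b) (hker : ∀ d, (∀ j, v j = 0 → d j = 0) → M *ᵥ d = 0 → d = 0)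
    (j : γ) : v j ∈ Set.range SignType.cast := by
  classical
  by_cases hj : v j = 0
  · exact ⟨0, by simp [hj]⟩
  set N := M.submatrix id (Subtype.val : {j // v j ≠ 0} → γ)
  have hN : Function.Injective N.mulVec := by
    refine (injective_iff_map_eq_zero N.mulVecLin).2 fun u hu => ?_
    set d : γ → K := fun j => if h : v j = 0 then 0 else u ⟨j, h⟩
    have hdu : d ∘ Subtype.val = u := funext fun j => dif_neg j.2
    have hd : ∀ j, v j = 0 → d j = 0 := fun j h => dif_pos h
    have hMd : M *ᵥ d = 0 := by
      rw [← submatrix_val_mulVec_comp_val M fun j h => hd j (not_not.1 h), hdu]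
      exact hu
    rw [← hdu, hker d hd hMd]
    rfl
  obtain ⟨f, hf⟩ := exists_det_submatrix_ne_zero N hN
  refine hTU.apply_mem_range_of_submatrix_mulVec_eq f Subtype.val hf (u := v ∘ Subtype.val)
    (funext fun i => ?_) ⟨j, hj⟩
  rw [← hv, ← submatrix_val_mulVec_comp_val M fun j h => not_not.1 h]
  rfl

end Matrix

section Polyhedron

open Filter Topology

variable {ρ γ : Type*} [Fintype γ] {M : Matrix ρ γ ℝ} {b : ρ → ℝ} {z : γ → ℝ}

lemma eq_zero_of_mem_extremePoints_of_mulVec_eq_zero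
    (hz : z ∈ Set.extremePoints ℝ {z | 0 ≤ z ∧ M *ᵥ z = b}) {d : γ → ℝ}
    (hd : ∀ j, z j = 0 → d j = 0) (hMd : M *ᵥ d = 0) : d = 0 := by
  obtain ⟨⟨hz₀, hzb⟩, hext⟩ := hz
  have hsmall : ∀ᶠ t in 𝓝 (0 : ℝ), ∀ j, 0 ≤ z j + t * d j ∧ 0 ≤ z j - t * d j := by
    refine eventually_all.2 fun j => ?_
    rcases (hz₀ j).eq_or_lt with h | h
    · exact Eventually.of_forall fun t => by simp [hd j h.symm, ← h]
    · have hplus : Tendsto (fun t : ℝ => z j + t * d j) (𝓝 0) (𝓝 (z j)) :=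
        Continuous.tendsto' (by fun_prop) _ _ (by simp)
      have hminus : Tendsto (fun t : ℝ => z j - t * d j) (𝓝 0) (𝓝 (z j)) :=
        Continuous.tendsto' (by fun_prop) _ _ (by simp)
      exact ((hplus.eventually_const_lt h).and (hminus.eventually_const_lt h)).mono
        fun t ht => ⟨ht.1.le, ht.2.le⟩
  obtain ⟨t, ht, ht₀⟩ := ((eventually_nhdsWithin_of_eventually_nhds hsmall).and
    (self_mem_nhdsWithin (s := Set.Ioi 0))).exists
  have hmem : ∀ s : ℝ, (∀ j, 0 ≤ z j + s * d j) → z + s • d ∈ {z | 0 ≤ z ∧ M *ᵥ z = b} :=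
    fun s hs => ⟨hs, by rw [mulVec_add, mulVec_smul, hMd, smul_zero, add_zero, hzb]⟩
  have hseg : z ∈ openSegment ℝ (z + t • d) (z + (-t) • d) :=
    ⟨1 / 2, 1 / 2, by norm_num, by norm_num, by norm_num, by module⟩
  have htd := hext (hmem t fun j => (ht j).1)
    (hmem (-t) fun j => by simpa [sub_eq_add_neg] using (ht j).2) hseg
  rw [add_eq_left, smul_eq_zero] at htd
  exact htd.resolve_left ht₀.ne'

lemma mem_zero_one_of_mem_extremePoints [Fintype ρ]
    (hTU : (fromCols M (replicateCol Unit b)).IsTotallyUnimodular)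
    (hz : z ∈ Set.extremePoints ℝ {z | 0 ≤ z ∧ M *ᵥ z = b}) (j : γ) :
    z j ∈ ({0, 1} : Set ℝ) := by
  obtain ⟨s, hs⟩ := hTU.apply_mem_range_of_mulVec_eq hz.1.2
    (fun _ hd hMd => eq_zero_of_mem_extremePoints_of_mulVec_eq_zero hz hd hMd) j
  have hz₀ : 0 ≤ z j := hz.1.1 j
  cases s with
  | zero => simp [← hs]
  | neg => norm_num [← hs] at hz₀
  | pos => simp [← hs]

end Polyhedron

section StandardForm

variable {m n : ℕ} (A : Matrix (Fin m) (Fin n) ℝ) (k : Fin m) (I : Finset (Fin m))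

abbrev LPRow (m : ℕ) (I : Finset (Fin m)) : Type := {i : Fin m // i ∉ I} ⊕ {i // i ∈ I} ⊕ Unit

abbrev LPCol (m n : ℕ) (I : Finset (Fin m)) : Type :=
  Fin n ⊕ Fin n ⊕ {i : Fin m // i ∉ I} ⊕ {i : Fin m // i ∉ I}

def lpRow : LPRow m I → Fin m :=
  Sum.elim Subtype.val (Sum.elim Subtype.val fun _ => k)

/-- Columns are `x₊, x₋, y₊, y₋`; row `inl i` encodes `A(i,:)(x₊ - x₋) = y₊ i - y₋ i` for `i ∈ Ī`,
row `inr (inl i)` the constraint for `i ∈ I` and row `inr (inr ())` the one for `k`. -/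
def lpMatrix : Matrix (LPRow m I) (LPCol m n I) ℝ :=
  let Ak := A.submatrix (lpRow k I) id
  let E : Matrix (LPRow m I) {i : Fin m // i ∉ I} ℝ := fromRows 1 0
  fromCols Ak (fromCols (-Ak) (fromCols (-E) E))

def lpRhs : LPRow m I → ℝ :=
  Sum.elim 0 (Sum.elim 0 1)

def lpEquiv : LPPoint m n I ≃ₗ[ℝ] (LPCol m n I → ℝ) :=
  let e {α β : Type} := (LinearEquiv.sumArrowLequivProdArrow α β ℝ ℝ).symm
  (LinearEquiv.refl ℝ _).prodCongr ((LinearEquiv.refl ℝ _).prodCongr e ≪≫ₗ e) ≪≫ₗ e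

lemma lpEquiv_apply (θ : LPPoint m n I) :
    lpEquiv I θ = Sum.elim θ.1 (Sum.elim θ.2.1 (Sum.elim θ.2.2.1 θ.2.2.2)) := by
  ext (i | i | j | j) <;> rfl

lemma lpMatrix_mulVec_lpEquiv (θ : LPPoint m n I) :
    lpMatrix A k I *ᵥ lpEquiv I θ =
      (A *ᵥ (θ.1 - θ.2.1)) ∘ lpRow k I - Sum.elim (θ.2.2.1 - θ.2.2.2) 0 := by
  have hAk : ∀ v, A.submatrix (lpRow k I) id *ᵥ v = (A *ᵥ v) ∘ lpRow k I := fun _ => rfl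
  rw [lpEquiv_apply]
  simp only [lpMatrix, fromCols_mulVec_sumElim, fromRows_mulVec, hAk, mulVec_sub, neg_mulVec,
    one_mulVec, zero_mulVec]
  ext (j | i | u) <;>
    simp only [Pi.add_apply, Pi.sub_apply, Pi.neg_apply, Pi.zero_apply, Function.comp_apply,
      Sum.elim_inl, Sum.elim_inr] <;>
    ring

lemma lpEquiv_preimage :
    lpEquiv I ⁻¹' {z | 0 ≤ z ∧ lpMatrix A k I *ᵥ z = lpRhs I} = lpQ A k I := by
  ext θ
  simp only [Set.mem_preimage, Set.mem_ofPred_eq, lpMatrix_mulVec_lpEquiv, lpQ]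
  rw [lpEquiv_apply]
  simp only [Pi.le_def, Pi.zero_apply, Pi.one_apply, Pi.sub_apply, Sum.forall, Sum.elim_inl,
    Sum.elim_inr, Subtype.forall, lpRow, lpRhs, funext_iff, Function.comp_apply, mulVec_apply, row,
    dotProduct_sub, sub_eq_zero, sub_zero, forall_const]
  tauto

lemma isTotallyUnimodular_fromCols_lpMatrix (hA : A.IsTotallyUnimodular) :
    (fromCols (lpMatrix A k I) (replicateCol Unit (lpRhs I))).IsTotallyUnimodular := by
  have hD := (hA.submatrix (lpRow k I) id).fromCols_one
  let col : LPCol m n I ⊕ Unit → Fin n ⊕ LPRow m I :=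
    Sum.elim (Sum.elim .inl (Sum.elim .inl (Sum.elim (.inr ∘ .inl) (.inr ∘ .inl))))
      fun _ => .inr (.inr (.inr ()))
  let sign : LPCol m n I ⊕ Unit → SignType :=
    Sum.elim (Sum.elim 1 (Sum.elim (-1) (Sum.elim (-1) 1))) 1
  convert (hD.submatrix id col).mul_diagonal_signType sign
  ext (r | r | r) ((c | c | j | j) | u) <;>
    simp [lpMatrix, lpRhs, col, sign, mul_diagonal, one_apply]

end StandardForm

theorem stmt2_general {m n : ℕ} (A : Matrix (Fin m) (Fin n) ℝ) (hA : A.IsTotallyUnimodular)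
    (k : Fin m) (I : Finset (Fin m))
    (θ : LPPoint m n I)
    (hext : θ ∈ Set.extremePoints ℝ (lpQ A k I)) :
    (∀ i : Fin n, θ.1 i ∈ ({0, 1} : Set ℝ)) ∧
      (∀ i : Fin n, θ.2.1 i ∈ ({0, 1} : Set ℝ)) ∧
      (∀ j : {i : Fin m // i ∉ I}, θ.2.2.1 j ∈ ({0, 1} : Set ℝ)) ∧
      (∀ j : {i : Fin m // i ∉ I}, θ.2.2.2 j ∈ ({0, 1} : Set ℝ)) := by
  have hz : lpEquiv I θ ∈ Set.extremePoints ℝ {z | 0 ≤ z ∧ lpMatrix A k I *ᵥ z = lpRhs I} := by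
    have h := Set.mem_image_of_mem (lpEquiv I) hext
    rwa [image_extremePoints, ← lpEquiv_preimage, Set.image_preimage_eq _ (lpEquiv I).surjective]
      at h
  have h01 := mem_zero_one_of_mem_extremePoints (isTotallyUnimodular_fromCols_lpMatrix A k I hA) hz
  exact ⟨fun i => h01 (.inl i), fun i => h01 (.inr (.inl i)), fun j => h01 (.inr (.inr (.inl j))),
    fun j => h01 (.inr (.inr (.inr j)))⟩

/-- Every extreme point `(x₊, x₋, y₊, y₋)` of the standard-form LP polyhedron `Q`
has all of its coordinates in `{0, 1}`. -/
theorem stmt2 {m n : ℕ} (A : Matrix (Fin m) (Fin n) ℝ) (hA : A.IsTotallyUnimodular)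
    (k : Fin m) (I : Finset (Fin m)) (hk : k ∉ I)
    (θ : LPPoint m n I)
    (hext : θ ∈ Set.extremePoints ℝ (lpQ A k I)) :
    (∀ i : Fin n, θ.1 i ∈ ({0, 1} : Set ℝ)) ∧
      (∀ i : Fin n, θ.2.1 i ∈ ({0, 1} : Set ℝ)) ∧
      (∀ j : {i : Fin m // i ∉ I}, θ.2.2.1 j ∈ ({0, 1} : Set ℝ)) ∧
      (∀ j : {i : Fin m // i ∉ I}, θ.2.2.2 j ∈ ({0, 1} : Set ℝ)) :=
  stmt2_general A hA k I θ hext
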